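/- arXiv:1910.09486 — 2 statements merged into one kernel-verified Lean document; each statement's English description precedes it below -/
import Mathlib

section
/- The function h(r) = tanh(r)/cosh(2r) is strictly decreasing on the interval [0.531, ∞). -/
/-!
With `c = cosh (2r)`, the identities `cosh² - sinh² = 1` and `sinh (2r) = 2 sinh r cosh r`
collapse the numerator of the derivative of `tanh r / cosh (2r) = sinh r / (cosh r cosh (2r))`
to `1 + c - c²`, which is negative exactly when `c` exceeds the golden ratio `φ`.
Since `cosh` increases on `[0, ∞)`, the quotient decreases on `[a, ∞)` as soon as
`φ < cosh (2a)`; the threshold `arcosh φ / 2 ≈ 0.5306` is just below `0.531`.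
-/

open Real Set
open scoped goldenRatio

theorem hasDerivAt_tanh_div_cosh_two_mul (x : ℝ) :
    HasDerivAt (fun r : ℝ => tanh r / cosh (2 * r))
      ((1 + cosh (2 * x) - cosh (2 * x) ^ 2) / (cosh x * cosh (2 * x)) ^ 2) x := by
  have hcosh_two_mul : HasDerivAt (fun r : ℝ => cosh (2 * r)) (sinh (2 * x) * 2) x :=
    (hasDerivAt_cosh (2 * x)).comp x (by simpa using (hasDerivAt_id x).const_mul (2 : ℝ))
  have hden : HasDerivAt (fun r : ℝ => cosh r * cosh (2 * r))
      (sinh x * cosh (2 * x) + cosh x * (sinh (2 * x) * 2)) x :=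
    (hasDerivAt_cosh x).mul hcosh_two_mul
  have hfun : (fun r : ℝ => tanh r / cosh (2 * r)) = fun r => sinh r / (cosh r * cosh (2 * r)) := by
    funext r
    rw [tanh_eq_sinh_div_cosh, div_div]
  rw [hfun]
  refine ((hasDerivAt_sinh x).div hden (mul_pos (cosh_pos x) (cosh_pos _)).ne').congr_deriv ?_
  congr 1
  have hx := cosh_sq_sub_sinh_sq x
  have h2x := cosh_sq_sub_sinh_sq (2 * x)
  rw [sinh_two_mul] at h2x ⊢
  linear_combination cosh (2 * x) * hx + h2x

theorem one_add_sub_sq_neg_of_goldenRatio_lt {c : ℝ} (hc : φ < c) : 1 + c - c ^ 2 < 0 := by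
  have hpos : 0 < (c - φ) * (c + φ - 1) :=
    mul_pos (sub_pos.2 hc) (by linarith [one_lt_goldenRatio])
  nlinarith [goldenRatio_sq]

theorem tanh_div_cosh_two_mul_strictAntiOn_Ici {a : ℝ} (ha : 0 ≤ a) (hφ : φ < cosh (2 * a)) :
    StrictAntiOn (fun r : ℝ => tanh r / cosh (2 * r)) (Ici a) := by
  refine strictAntiOn_of_deriv_neg (convex_Ici a)
    (fun x _ => (hasDerivAt_tanh_div_cosh_two_mul x).continuousAt.continuousWithinAt)
    fun x hx => ?_
  rw [interior_Ici, mem_Ioi] at hx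
  rw [(hasDerivAt_tanh_div_cosh_two_mul x).deriv]
  refine div_neg_of_neg_of_pos (one_add_sub_sq_neg_of_goldenRatio_lt ?_) (by positivity)
  exact hφ.trans <| cosh_strictMonoOn (mem_Ici.2 (by linarith)) (mem_Ici.2 (by linarith))
    (by linarith)

theorem goldenRatio_lt_cosh_1_062 : φ < cosh 1.062 := by
  have hφ : φ < 1.6181 := by
    have : √5 < 2.2362 := by rw [sqrt_lt' (by norm_num)]; norm_num
    rw [goldenRatio]
    linarith
  have hexp : 2.892 ≤ exp 1.062 := by
    refine le_trans ?_ (sum_le_exp_of_nonneg (by norm_num) 8)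
    simp only [Finset.sum_range_succ, Finset.sum_range_zero, Nat.factorial]
    norm_num
  have hexp_mul : exp 1.062 * exp (-1.062) = 1 := by rw [← exp_add]; norm_num
  have hexp_neg_pos := exp_pos (-1.062)
  rw [cosh_eq]
  nlinarith [mul_nonneg (sub_nonneg.2 hexp) hexp_neg_pos.le]

theorem tanh_div_cosh_strictAntiOn :
    StrictAntiOn (fun r : ℝ => Real.tanh r / Real.cosh (2 * r)) (Set.Ici (0.531 : ℝ)) :=
  tanh_div_cosh_two_mul_strictAntiOn_Ici (by norm_num) <| by
    convert goldenRatio_lt_cosh_1_062 using 2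
    norm_num
end

section
/- Let F be a free group, x ∈ F nontrivial, y ∈ F, and m, n nonzero integers. If y·xᵐ·y⁻¹ = xⁿ, then m = n and y commutes with x. -/
/-!
By Nielsen–Schreier the subgroup `⟨a, b⟩` generated by two elements of a free group is free,
and a free group with at most one generator is cyclic. Homomorphisms to `ℤ` detect this: if
every `φ : ⟨a, b⟩ →* ℤ` vanishing at `b` vanishes at `a`, then `φ ↦ φ b` embeds
`Hom(⟨a, b⟩, ℤ) ≅ ℤ ^ Generators` into `ℤ`, so there is at most one generator and `a`, `b`
commute.

If `m ≠ n`, the relation `y x^m y⁻¹ = x^n` forces `φ x = 1` for every such `φ` on `⟨x, y⟩`.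
If `m = n`, `y` commutes with `x^m`, so `x^m = z^p` and `y = z^q` for some `z`, and
`x^m = z^p` gives the criterion on `⟨x, z⟩`. Either way `y` commutes with `x`, hence
`x^m = x^n`, and since free groups are torsion-free, `m = n`.
-/

open Subgroup

theorem Subgroup.left_mem_closure_pair {G : Type*} [Group G] (a b : G) : a ∈ closure {a, b} :=
  subset_closure (Set.mem_insert a {b})

theorem Subgroup.right_mem_closure_pair {G : Type*} [Group G] (a b : G) : b ∈ closure {a, b} :=
  subset_closure (Set.mem_insert_of_mem a rfl)

theorem IsMulTorsionFree.zpow_right_injective {G : Type*} [Group G] [IsMulTorsionFree G]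
    {a : G} (ha : a ≠ 1) : Function.Injective (a ^ · : ℤ → G) :=
  injective_zpow_iff_not_isOfFinOrder.2 (by rwa [isOfFinOrder_iff_eq_one])

namespace IsFreeGroup

variable {G : Type*} [Group G] [IsFreeGroup G]

theorem not_commute_of_ne {s t : Generators G} (hst : s ≠ t) : ¬Commute (of s) (of t) := by
  classical
  intro h
  let f : G →* FreeGroup Bool := lift fun r => if r = s then .of true else .of false
  have key := congrArg f h.eq
  simp only [map_mul, f, lift_of, if_neg hst.symm] at key
  exact absurd key (by decide)

theorem subsingleton_generators_of_isMulCommutative [IsMulCommutative G] :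
    Subsingleton (Generators G) :=
  ⟨fun _ _ => by_contra fun hst => not_commute_of_ne hst (Std.Commutative.comm _ _)⟩

theorem isCyclic_of_subsingleton_generators [Subsingleton (Generators G)] : IsCyclic G := by
  rw [← (mulEquiv G).isCyclic]
  cases isEmpty_or_nonempty (Generators G)
  · infer_instance
  · have := uniqueOfSubsingleton (Classical.arbitrary (Generators G))
    infer_instance

theorem isCyclic_of_isMulCommutative [IsMulCommutative G] : IsCyclic G :=
  have := subsingleton_generators_of_isMulCommutative (G := G)
  isCyclic_of_subsingleton_generators

/-- For generators `s ≠ t` with indicator homomorphisms `χ s`, `χ t`, the combination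
`χ s ^ χ t b / χ t ^ χ s b` vanishes at `b` but not at `of s`. -/
theorem subsingleton_generators_of_forall_map_eq_one (b : G)
    (hb : ∀ φ : G →* Multiplicative ℤ, φ b = 1 → φ = 1) : Subsingleton (Generators G) := by
  classical
  refine ⟨fun s t => by_contra fun hst => ?_⟩
  let χ (r : Generators G) : G →* Multiplicative ℤ := lift (Pi.mulSingle r (.ofAdd 1))
  have hχ (r : Generators G) : χ r ≠ 1 := fun h => by
    simpa [χ] using DFunLike.congr_fun h (of r)
  let ψ := χ s ^ (χ t b).toAdd / χ t ^ (χ s b).toAdd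
  have hψ : ψ = 1 := hb ψ <| Multiplicative.toAdd.injective <| by
    simp only [ψ, MonoidHom.div_apply, MonoidHom.zpow_apply, toAdd_div, toAdd_zpow, toAdd_one,
      smul_eq_mul]
    ring
  have hχtb : χ t b = 1 := by simpa [ψ, χ, hst] using DFunLike.congr_fun hψ (of s)
  exact hχ t (hb _ hχtb)

theorem exists_zpow_eq_of_commute {a b : G} (h : Commute a b) :
    ∃ z : G, ∃ p q : ℤ, a = z ^ p ∧ b = z ^ q := by
  have := isMulCommutative_closure (k := {a, b}) <| by
    rintro x (rfl | rfl) y (rfl | rfl)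
    exacts [rfl, h.eq, h.symm.eq, rfl]
  obtain ⟨g, hg⟩ := (isCyclic_of_isMulCommutative (G := closure {a, b})).exists_generator
  obtain ⟨p, hp⟩ := mem_zpowers_iff.mp (hg ⟨a, left_mem_closure_pair a b⟩)
  obtain ⟨q, hq⟩ := mem_zpowers_iff.mp (hg ⟨b, right_mem_closure_pair a b⟩)
  exact ⟨g, p, q, congrArg Subtype.val hp.symm, congrArg Subtype.val hq.symm⟩

theorem commute_of_forall_map_eq_one {a b : G}
    (h : ∀ φ : closure {a, b} →* Multiplicative ℤ,
      φ ⟨b, right_mem_closure_pair a b⟩ = 1 → φ ⟨a, left_mem_closure_pair a b⟩ = 1) :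
    Commute a b := by
  set A : closure {a, b} := ⟨a, left_mem_closure_pair a b⟩
  set B : closure {a, b} := ⟨b, right_mem_closure_pair a b⟩
  have := subsingleton_generators_of_forall_map_eq_one B fun φ hφ =>
    MonoidHom.eq_of_eqOn_dense (closure_closure_coe_preimage (k := {a, b})) <| by
      rintro ⟨x, hx⟩ (rfl | rfl : x = a ∨ x = b)
      exacts [h φ hφ, hφ]
  have := isCyclic_of_subsingleton_generators (G := closure {a, b})
  let := IsCyclic.commGroup (α := closure {a, b})
  exact congrArg Subtype.val (mul_comm A B)

theorem commute_of_commute_zpow {a b : G} {m : ℤ} (hm : m ≠ 0) (h : Commute (a ^ m) b) :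
    Commute a b := by
  obtain ⟨z, p, q, hp, rfl⟩ := exists_zpow_eq_of_commute h
  refine Commute.zpow_right (commute_of_forall_map_eq_one fun φ hφ => ?_) q
  set A : closure {a, z} := ⟨a, left_mem_closure_pair a z⟩
  set Z : closure {a, z} := ⟨z, right_mem_closure_pair a z⟩
  have := congrArg φ (Subtype.ext hp : A ^ m = Z ^ p)
  rwa [map_zpow, map_zpow, hφ, one_zpow, IsMulTorsionFree.zpow_eq_one_iff_left hm] at this

theorem commute_of_conj_zpow_eq_zpow {a b : G} {m n : ℤ} (hmn : m ≠ n)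
    (h : b * a ^ m * b⁻¹ = a ^ n) : Commute a b :=
  commute_of_forall_map_eq_one fun φ _ => by
    set A : closure {a, b} := ⟨a, left_mem_closure_pair a b⟩
    set B : closure {a, b} := ⟨b, right_mem_closure_pair a b⟩
    have := congrArg φ (Subtype.ext h : B * A ^ m * B⁻¹ = A ^ n)
    rw [map_mul, map_mul, map_inv, mul_inv_cancel_comm, map_zpow, map_zpow] at this
    by_contra hA
    exact hmn (IsMulTorsionFree.zpow_right_injective hA this)

end IsFreeGroup

theorem freeGroup_conj_zpow_eq_general {α : Type*} (x y : FreeGroup α) (m n : ℤ)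
    (hx : x ≠ 1) (hm : m ≠ 0)
    (h : y * x ^ m * y⁻¹ = x ^ n) : m = n ∧ Commute y x := by
  have hyx : Commute y x := by
    rcases eq_or_ne m n with rfl | hmn
    · exact (IsFreeGroup.commute_of_commute_zpow hm (mul_inv_eq_iff_eq_mul.mp h).symm).symm
    · exact (IsFreeGroup.commute_of_conj_zpow_eq_zpow hmn h).symm
  rw [(hyx.zpow_right m).eq, mul_inv_cancel_right] at h
  exact ⟨IsMulTorsionFree.zpow_right_injective hx h, hyx⟩

theorem freeGroup_conj_zpow_eq {α : Type*} (x y : FreeGroup α) (m n : ℤ)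
    (hx : x ≠ 1) (hm : m ≠ 0) (hn : n ≠ 0)
    (h : y * x ^ m * y⁻¹ = x ^ n) : m = n ∧ Commute y x :=
  freeGroup_conj_zpow_eq_general x y m n hx hm h
end
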